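/- Let X be a topological space and Δ ⊆ CL(X) a family closed under finite unions containing all singletons. A family ξ of tuples (K; V₁,…,Vₙ), where K ⊆ X is compact and V₁,…,Vₙ are open sets meeting Kᶜ, is a π_F(Δ)-network of X if and only if the collection 𝒰 = {(⋂ᵢ₌₁ⁿ Vᵢ⁻) ∩ (Kᶜ)⁺ : (K; V₁,…,Vₙ) ∈ ξ} is an open cover of Δ with the subspace Fell topology. -/

import Mathlib

open Set

universe u

variable {X : Type u}

def CLfam (X : Type u) [TopologicalSpace X] (Δ : Set (Set X)) : Prop :=
  (∀ A ∈ Δ, IsClosed A ∧ A.Nonempty) ∧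
  (∀ A ∈ Δ, ∀ B ∈ Δ, A ∪ B ∈ Δ) ∧
  (∀ x : X, ({x} : Set X) ∈ Δ)

def fbasic (K : Set X) (L : List (Set X)) : Set (Set X) :=
  {A | A ⊆ Kᶜ ∧ ∀ V ∈ L, (A ∩ V).Nonempty}

def fell (X : Type u) [TopologicalSpace X] : TopologicalSpace (Set X) :=
  TopologicalSpace.generateFrom
    {S | ∃ K : Set X, IsCompact K ∧ ∃ L : List (Set X), (∀ V ∈ L, IsOpen V) ∧ S = fbasic K L}

def fellSub [TopologicalSpace X] (Δ : Set (Set X)) : TopologicalSpace ↥Δ :=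
  TopologicalSpace.induced Subtype.val (fell X)

def piFnetwork [TopologicalSpace X] (Δ : Set (Set X)) (ξ : Set (Set X × List (Set X))) : Prop :=
  ∀ U ∈ compl '' Δ, ∃ p ∈ ξ, ∃ F : Set X, F.Finite ∧
    (∀ V ∈ p.2, (F ∩ V).Nonempty) ∧ p.1 ⊆ U ∧ F ∩ U = ∅

/-!
Taking `U = Aᶜ`, the network condition for `(K; V₁,…,Vₙ)` asks for a finite `F ⊆ A` meeting every
`Vᵢ` with `K ∩ A = ∅`; such an `F` exists exactly when `A` meets every `Vᵢ` (pick one point in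
each), i.e. when `A ∈ (⋂ᵢ Vᵢ⁻) ∩ (Kᶜ)⁺`. So being a network is the covering property, while
openness of the members of `𝒰` holds for every family of compact sets and open sets.
-/

lemma exists_finite_subset_forall_inter_nonempty {A : Set X} :
    ∀ {L : List (Set X)}, (∀ V ∈ L, (A ∩ V).Nonempty) →
      ∃ F ⊆ A, F.Finite ∧ ∀ V ∈ L, (F ∩ V).Nonempty
  | [], _ => ⟨∅, empty_subset A, finite_empty, by simp⟩
  | V :: L, hL => by
    obtain ⟨x, hxA, hxV⟩ := hL V List.mem_cons_self
    obtain ⟨F, hFA, hF, hFL⟩ :=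
      exists_finite_subset_forall_inter_nonempty fun W hW => hL W (List.mem_cons_of_mem V hW)
    refine ⟨insert x F, insert_subset hxA hFA, hF.insert x, ?_⟩
    rintro W (_ | ⟨_, hW⟩)
    · exact ⟨x, mem_insert x F, hxV⟩
    · exact (hFL W hW).mono (inter_subset_inter_left W (subset_insert x F))

lemma mem_fbasic_iff_exists_finite {A K : Set X} {L : List (Set X)} :
    A ∈ fbasic K L ↔
      ∃ F : Set X, F.Finite ∧ (∀ V ∈ L, (F ∩ V).Nonempty) ∧ K ⊆ Aᶜ ∧ F ∩ Aᶜ = ∅ := by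
  simp only [fbasic, mem_ofPred_eq, ← sdiff_eq, sdiff_eq_empty, subset_compl_comm (s := A)]
  constructor
  · rintro ⟨hKA, hL⟩
    obtain ⟨F, hFA, hF, hFL⟩ := exists_finite_subset_forall_inter_nonempty hL
    exact ⟨F, hF, hFL, hKA, hFA⟩
  · rintro ⟨F, -, hFL, hKA, hFA⟩
    exact ⟨hKA, fun V hV => (hFL V hV).mono (inter_subset_inter_left V hFA)⟩

lemma piFnetwork_iff_forall_exists_mem_fbasic [TopologicalSpace X] {Δ : Set (Set X)}
    {ξ : Set (Set X × List (Set X))} :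
    piFnetwork Δ ξ ↔ ∀ A ∈ Δ, ∃ p ∈ ξ, A ∈ fbasic p.1 p.2 := by
  simp only [piFnetwork, forall_mem_image, mem_fbasic_iff_exists_finite]

lemma isOpen_fbasic [TopologicalSpace X] {K : Set X} {L : List (Set X)} (hK : IsCompact K)
    (hL : ∀ V ∈ L, IsOpen V) : @IsOpen _ (fell X) (fbasic K L) :=
  TopologicalSpace.isOpen_generateFrom_of_mem ⟨K, hK, L, hL, rfl⟩

theorem stmt3_general [TopologicalSpace X] (Δ : Set (Set X))
    (ξ : Set (Set X × List (Set X)))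
    (hξ : ∀ p ∈ ξ, IsCompact p.1 ∧ p.2 ≠ [] ∧ ∀ V ∈ p.2, IsOpen V ∧ (V ∩ p.1ᶜ).Nonempty) :
    piFnetwork Δ ξ ↔
      ((∀ p ∈ ξ, @IsOpen ↥Δ (fellSub Δ) {A : ↥Δ | (A : Set X) ∈ fbasic p.1 p.2}) ∧
        ∀ A : ↥Δ, ∃ p ∈ ξ, (A : Set X) ∈ fbasic p.1 p.2) := by
  have hopen : ∀ p ∈ ξ, @IsOpen ↥Δ (fellSub Δ) {A : ↥Δ | (A : Set X) ∈ fbasic p.1 p.2} :=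
    fun p hp => @isOpen_induced _ _ (fell X) _ _ <|
      isOpen_fbasic (hξ p hp).1 fun V hV => ((hξ p hp).2.2 V hV).1
  rw [piFnetwork_iff_forall_exists_mem_fbasic, and_iff_right hopen, Subtype.forall]

theorem stmt3 [TopologicalSpace X] (Δ : Set (Set X)) (hΔ : CLfam X Δ)
    (ξ : Set (Set X × List (Set X)))
    (hξ : ∀ p ∈ ξ, IsCompact p.1 ∧ p.2 ≠ [] ∧ ∀ V ∈ p.2, IsOpen V ∧ (V ∩ p.1ᶜ).Nonempty) :
    piFnetwork Δ ξ ↔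
      ((∀ p ∈ ξ, @IsOpen ↥Δ (fellSub Δ) {A : ↥Δ | (A : Set X) ∈ fbasic p.1 p.2}) ∧
        ∀ A : ↥Δ, ∃ p ∈ ξ, (A : Set X) ∈ fbasic p.1 p.2) :=
  stmt3_general Δ ξ hξ
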